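/- arXiv:1610.06320 — 2 statements merged into one kernel-verified Lean document; each statement's English description precedes it below -/
import Mathlib

section
/- Let p ∈ (1,2] and δ > 0. There exists a constant c > 0 depending only on p such that for all d ≥ 1 and all real d×d matrices P, Q: |F(P) − F(Q)| ≤ c·δ^{(p−2)/2}·|P^sym − Q^sym|; that is, F is Lipschitz continuous on matrices with Lipschitz constant of order δ^{(p−2)/2}. -/
open Matrix

/-- Symmetric part `P^sym = (P + Pᵀ)/2` of a square matrix. -/
noncomputable def msym {d : ℕ} (P : Matrix (Fin d) (Fin d) ℝ) : Matrix (Fin d) (Fin d) ℝ :=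
  (2⁻¹ : ℝ) • (P + Pᵀ)

/-- Frobenius inner product `A:B = ∑ᵢⱼ Aᵢⱼ Bᵢⱼ`. -/
noncomputable def mdot {d : ℕ} (A B : Matrix (Fin d) (Fin d) ℝ) : ℝ :=
  ∑ i, ∑ j, A i j * B i j

/-- Frobenius norm `|A| = (A:A)^(1/2)`. -/
noncomputable def mnorm {d : ℕ} (A : Matrix (Fin d) (Fin d) ℝ) : ℝ :=
  Real.sqrt (mdot A A)

/-- Stress tensor `S(P) = (δ + |P^sym|)^(p-2) • P^sym` (real power, `0^r = 0` for `r < 0`). -/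
noncomputable def Smap (p δ : ℝ) {d : ℕ} (P : Matrix (Fin d) (Fin d) ℝ) :
    Matrix (Fin d) (Fin d) ℝ :=
  ((δ + mnorm (msym P)) ^ (p - 2)) • msym P

/-- Associated function `F(P) = (δ + |P^sym|)^((p-2)/2) • P^sym`. -/
noncomputable def Fmap (p δ : ℝ) {d : ℕ} (P : Matrix (Fin d) (Fin d) ℝ) :
    Matrix (Fin d) (Fin d) ℝ :=
  ((δ + mnorm (msym P)) ^ ((p - 2) / 2)) • msym P

/-!
For `r ∈ [-1, 0]` and `δ > 0` the map `u ↦ (δ + ‖u‖)^r • u` on any real normed space is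
`2 δ^r`-Lipschitz. If `‖v‖ ≤ ‖u‖`, split `x^r u - y^r v = x^r (u - v) + (x^r - y^r) v` with
`x = δ + ‖u‖ ≥ y = δ + ‖v‖`. The first term is at most `δ^r ‖u - v‖`; for the second,
`r ≥ -1` gives `(y^r - x^r) y ≤ y^r (x - y)`, which is again at most `δ^r ‖u - v‖`.
Since `F(P)` is this map with `r = (p - 2)/2` applied to `P^sym` in the Frobenius norm,
`c = 2` works.
-/

open scoped Matrix.Norms.Frobenius

theorem Real.one_sub_rpow_le_sub_one {t r : ℝ} (ht : 1 ≤ t) (hr : -1 ≤ r) :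
    1 - t ^ r ≤ t - 1 := by
  have ht0 : 0 < t := by linarith
  have hinv : t⁻¹ ≤ t ^ r := by
    simpa [Real.rpow_neg_one] using Real.rpow_le_rpow_of_exponent_le ht hr
  have hsq : 0 ≤ (t - 1) ^ 2 / t := by positivity
  have : (t - 1) ^ 2 / t = t + t⁻¹ - 2 := by field_simp; ring
  linarith

theorem Real.rpow_sub_rpow_mul_le {x y r : ℝ} (hy : 0 < y) (hyx : y ≤ x) (hr : -1 ≤ r) :
    (y ^ r - x ^ r) * y ≤ y ^ r * (x - y) := by
  have ht : 1 ≤ x / y := (one_le_div hy).mpr hyx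
  have hx : x ^ r = y ^ r * (x / y) ^ r := by
    rw [← Real.mul_rpow hy.le (by positivity), mul_div_cancel₀ _ hy.ne']
  have hyr : 0 ≤ y ^ r * y := by positivity
  calc (y ^ r - x ^ r) * y = y ^ r * y * (1 - (x / y) ^ r) := by rw [hx]; ring
    _ ≤ y ^ r * y * (x / y - 1) :=
        mul_le_mul_of_nonneg_left (Real.one_sub_rpow_le_sub_one ht hr) hyr
    _ = y ^ r * (x - y) := by field_simp

section Normed

variable {E : Type*} [NormedAddCommGroup E] [NormedSpace ℝ E]

theorem norm_rpow_smul_sub_rpow_smul_le_of_norm_le {r δ : ℝ} (hr1 : -1 ≤ r) (hr0 : r ≤ 0)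
    (hδ : 0 < δ) {u v : E} (hvu : ‖v‖ ≤ ‖u‖) :
    ‖(δ + ‖u‖) ^ r • u - (δ + ‖v‖) ^ r • v‖ ≤ 2 * δ ^ r * ‖u - v‖ := by
  set x := δ + ‖u‖
  set y := δ + ‖v‖
  have hy : 0 < y := by positivity
  have hyx : y ≤ x := by linarith
  have hxy : x - y ≤ ‖u - v‖ := by linarith [norm_sub_norm_le u v]
  have hxr : x ^ r ≤ y ^ r := Real.rpow_le_rpow_of_nonpos hy hyx hr0
  have hyr : y ^ r ≤ δ ^ r := Real.rpow_le_rpow_of_nonpos hδ (by linarith [norm_nonneg v]) hr0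
  have hxr0 : 0 ≤ x ^ r := by positivity
  have hvy : ‖v‖ ≤ y := by linarith
  calc ‖x ^ r • u - y ^ r • v‖ = ‖x ^ r • (u - v) + (x ^ r - y ^ r) • v‖ := by
        rw [smul_sub, sub_smul]; abel_nf
    _ ≤ x ^ r * ‖u - v‖ + (y ^ r - x ^ r) * ‖v‖ := by
        refine (norm_add_le _ _).trans_eq ?_
        rw [norm_smul, norm_smul, Real.norm_of_nonneg hxr0, Real.norm_of_nonpos (by linarith),
          neg_sub]
    _ ≤ δ ^ r * ‖u - v‖ + y ^ r * (x - y) := by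
        refine add_le_add (mul_le_mul_of_nonneg_right (hxr.trans hyr) (norm_nonneg _)) ?_
        exact (mul_le_mul_of_nonneg_left hvy (by linarith)).trans
          (Real.rpow_sub_rpow_mul_le hy hyx hr1)
    _ ≤ δ ^ r * ‖u - v‖ + δ ^ r * ‖u - v‖ := by
        gcongr
    _ = 2 * δ ^ r * ‖u - v‖ := by ring

theorem norm_rpow_smul_sub_rpow_smul_le {r δ : ℝ} (hr1 : -1 ≤ r) (hr0 : r ≤ 0) (hδ : 0 < δ)
    (u v : E) : ‖(δ + ‖u‖) ^ r • u - (δ + ‖v‖) ^ r • v‖ ≤ 2 * δ ^ r * ‖u - v‖ := by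
  rcases le_total ‖v‖ ‖u‖ with h | h
  · exact norm_rpow_smul_sub_rpow_smul_le_of_norm_le hr1 hr0 hδ h
  · rw [norm_sub_rev, norm_sub_rev u]
    exact norm_rpow_smul_sub_rpow_smul_le_of_norm_le hr1 hr0 hδ h

end Normed

theorem mnorm_eq_frobenius_norm {d : ℕ} (A : Matrix (Fin d) (Fin d) ℝ) : mnorm A = ‖A‖ := by
  simp only [mnorm, mdot, Matrix.frobenius_norm_def, Real.norm_eq_abs, Real.rpow_two,
    ← Real.sqrt_eq_rpow, sq, abs_mul_abs_self]

/-- For `p ∈ (1,2]` and `δ > 0` there is a constant `c > 0` depending only on `p` such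
that for all `d ≥ 1` and all real `d×d` matrices `P, Q`:
`|F(P) - F(Q)| ≤ c * δ^((p-2)/2) * |P^sym - Q^sym|`, i.e. `F` is Lipschitz with constant
of order `δ^((p-2)/2)`. -/
theorem stmt18 (p δ : ℝ) (hp : 1 < p) (hp2 : p ≤ 2) (hδ : 0 < δ) :
    ∃ c : ℝ, 0 < c ∧
      ∀ d : ℕ, 1 ≤ d → ∀ P Q : Matrix (Fin d) (Fin d) ℝ,
        mnorm (Fmap p δ P - Fmap p δ Q)
          ≤ c * δ ^ ((p - 2) / 2) * mnorm (msym P - msym Q) := by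
  refine ⟨2, two_pos, fun d _ P Q => ?_⟩
  simp only [Fmap, mnorm_eq_frobenius_norm]
  exact norm_rpow_smul_sub_rpow_smul_le (by linarith) (by linarith) hδ _ _
end

section
/- Let p > 1 and δ ≥ 0. For all d ≥ 1 and all real d×d matrices P, Q with P^sym ≠ Q^sym one has the strict monotonicity (S(P)−S(Q)):(P−Q) > 0. -/
open Matrix

/-!
Identify a matrix with its vector of entries in `EuclideanSpace ℝ (Fin d × Fin d)`, so that `:` becomes
the inner product. Since `S(P) - S(Q)` is symmetric, `(S(P) - S(Q)) : (P - Q)` only sees the symmetric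
parts `x = P^sym`, `y = Q^sym`, and equals `⟪φ(|x|) x - φ(|y|) y, x - y⟫` with `φ(t) = (δ + t)^(p-2)`.
By Cauchy–Schwarz this is at least `(φ(|x|)|x| - φ(|y|)|y|)(|x| - |y|)`, positive when `|x| ≠ |y|`
because `t ↦ φ(t) t` is strictly increasing for `p > 1`; when `|x| = |y|` it equals `φ(|x|)|x - y|²`.
-/

open RealInnerProductSpace Set

section InnerProductSpace

variable {E : Type*} [NormedAddCommGroup E] [InnerProductSpace ℝ E]

theorem mul_norm_sub_le_inner_smul_sub_smul {a b : ℝ} (hab : 0 ≤ a + b) (x y : E) :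
    (a * ‖x‖ - b * ‖y‖) * (‖x‖ - ‖y‖) ≤ ⟪a • x - b • y, x - y⟫ := by
  have hexpand : ⟪a • x - b • y, x - y⟫ = a * ‖x‖ ^ 2 + b * ‖y‖ ^ 2 - (a + b) * ⟪x, y⟫ := by
    simp only [inner_sub_left, inner_sub_right, real_inner_smul_left, real_inner_self_eq_norm_sq,
      real_inner_comm x y]
    ring
  rw [hexpand]
  nlinarith [mul_le_mul_of_nonneg_left (real_inner_le_norm x y) hab]

theorem inner_smul_norm_sub_smul_norm_pos {φ : ℝ → ℝ} (hφ : ∀ t, 0 ≤ t → 0 ≤ φ t)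
    (hmono : StrictMonoOn (fun t ↦ φ t * t) (Ici 0)) {x y : E} (hxy : x ≠ y) :
    0 < ⟪φ ‖x‖ • x - φ ‖y‖ • y, x - y⟫ := by
  rcases eq_or_ne ‖x‖ ‖y‖ with hnorm | hnorm
  · have hx : 0 < ‖x‖ := by
      refine (norm_nonneg x).lt_of_ne' fun hx ↦ hxy ?_
      rw [norm_eq_zero.1 hx, norm_eq_zero.1 (hnorm.symm.trans hx)]
    -- `φ t * t` increases strictly from `0` at `t = 0`, so `φ` is positive on `(0, ∞)`
    have hφx : 0 < φ ‖x‖ := by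
      have := hmono (mem_Ici.2 le_rfl) (mem_Ici.2 hx.le) hx
      simp only [mul_zero] at this
      exact pos_of_mul_pos_left this hx.le
    rw [← hnorm, ← smul_sub, real_inner_smul_left, real_inner_self_eq_norm_sq]
    exact mul_pos hφx (pow_pos (norm_pos_iff.2 (sub_ne_zero.2 hxy)) 2)
  · refine lt_of_lt_of_le ?_ (mul_norm_sub_le_inner_smul_sub_smul
      (add_nonneg (hφ _ (norm_nonneg x)) (hφ _ (norm_nonneg y))) x y)
    rcases hnorm.lt_or_gt with hlt | hlt
    · exact mul_pos_of_neg_of_neg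
        (sub_neg.2 (hmono (mem_Ici.2 (norm_nonneg x)) (mem_Ici.2 (norm_nonneg y)) hlt))
        (sub_neg.2 hlt)
    · exact mul_pos
        (sub_pos.2 (hmono (mem_Ici.2 (norm_nonneg y)) (mem_Ici.2 (norm_nonneg x)) hlt))
        (sub_pos.2 hlt)

end InnerProductSpace

theorem strictMonoOn_add_rpow_mul_self {r δ : ℝ} (hr : -1 < r) (hδ : 0 ≤ δ) :
    StrictMonoOn (fun t ↦ (δ + t) ^ r * t) (Ici 0) := by
  intro b hb a ha hab
  simp only [mem_Ici] at ha hb ⊢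
  have ha' : 0 < δ + a := by linarith
  rcases le_or_gt 0 r with hr0 | hr0
  · calc (δ + b) ^ r * b ≤ (δ + a) ^ r * b :=
          mul_le_mul_of_nonneg_right (Real.rpow_le_rpow (by linarith) (by linarith) hr0) hb
      _ < (δ + a) ^ r * a := mul_lt_mul_of_pos_left hab (Real.rpow_pos_of_pos ha' r)
  rcases (add_nonneg hδ hb).eq_or_lt with hb' | hb'
  · obtain ⟨rfl, rfl⟩ : δ = 0 ∧ b = 0 := ⟨by linarith, by linarith⟩
    simpa using mul_pos (Real.rpow_pos_of_pos ha' r) hab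
  have hsplit : ∀ t, 0 < δ + t → (δ + t) ^ r * t = (δ + t) ^ (r + 1) - δ * (δ + t) ^ r := by
    intro t ht
    rw [Real.rpow_add_one ht.ne']
    ring
  rw [hsplit a ha', hsplit b hb']
  have h1 : (δ + b) ^ (r + 1) < (δ + a) ^ (r + 1) :=
    Real.rpow_lt_rpow hb'.le (by linarith) (by linarith)
  have h2 : (δ + a) ^ r ≤ (δ + b) ^ r := Real.rpow_le_rpow_of_nonpos hb' (by linarith) hr0.le
  nlinarith [mul_le_mul_of_nonneg_left h2 hδ]

noncomputable def Matrix.toEuclideanProd {m n : Type*} [Fintype m] [Fintype n] :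
    Matrix m n ℝ ≃ₗ[ℝ] EuclideanSpace ℝ (m × n) :=
  (Matrix.ofLinearEquiv ℝ).symm ≪≫ₗ (LinearEquiv.curry ℝ ℝ m n).symm ≪≫ₗ
    (WithLp.linearEquiv 2 ℝ (m × n → ℝ)).symm

section Frobenius

variable {d : ℕ}

theorem mdot_eq_inner (A B : Matrix (Fin d) (Fin d) ℝ) :
    mdot A B = ⟪A.toEuclideanProd, B.toEuclideanProd⟫ := by
  simp [mdot, Matrix.toEuclideanProd, EuclideanSpace.inner_toLp_toLp, dotProduct,
    Fintype.sum_prod_type, mul_comm]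

theorem mnorm_eq_norm (A : Matrix (Fin d) (Fin d) ℝ) : mnorm A = ‖A.toEuclideanProd‖ := by
  rw [mnorm, mdot_eq_inner, norm_eq_sqrt_real_inner]

theorem mdot_transpose_transpose (A B : Matrix (Fin d) (Fin d) ℝ) : mdot Aᵀ Bᵀ = mdot A B :=
  Finset.sum_comm

theorem msym_sub (P Q : Matrix (Fin d) (Fin d) ℝ) : msym (P - Q) = msym P - msym Q := by
  rw [msym, msym, msym, transpose_sub, ← smul_sub]
  abel_nf

theorem transpose_msym (P : Matrix (Fin d) (Fin d) ℝ) : (msym P)ᵀ = msym P := by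
  rw [msym, transpose_smul, transpose_add, transpose_transpose, add_comm]

theorem transpose_Smap (p δ : ℝ) (P : Matrix (Fin d) (Fin d) ℝ) :
    (Smap p δ P)ᵀ = Smap p δ P := by
  rw [Smap, transpose_smul, transpose_msym]

theorem mdot_msym_of_transpose_eq {M : Matrix (Fin d) (Fin d) ℝ} (hM : Mᵀ = M)
    (X : Matrix (Fin d) (Fin d) ℝ) : mdot M (msym X) = mdot M X := by
  have htr : mdot M Xᵀ = mdot M X := by
    conv_lhs => rw [← hM]
    exact mdot_transpose_transpose M X
  rw [msym, mdot_eq_inner, map_smul, map_add, inner_smul_right, inner_add_right,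
    ← mdot_eq_inner, ← mdot_eq_inner, htr]
  ring

end Frobenius

theorem stmt19_general (p δ : ℝ) (hp : 1 < p) (hδ : 0 ≤ δ) (d : ℕ)
    (P Q : Matrix (Fin d) (Fin d) ℝ) (hPQ : msym P ≠ msym Q) :
    0 < mdot (Smap p δ P - Smap p δ Q) (P - Q) := by
  have hsymm : (Smap p δ P - Smap p δ Q)ᵀ = Smap p δ P - Smap p δ Q := by
    rw [transpose_sub, transpose_Smap, transpose_Smap]
  rw [← mdot_msym_of_transpose_eq hsymm, msym_sub, mdot_eq_inner, Smap, Smap, map_sub, map_sub,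
    map_smul, map_smul, mnorm_eq_norm, mnorm_eq_norm]
  exact inner_smul_norm_sub_smul_norm_pos (φ := fun t ↦ (δ + t) ^ (p - 2))
    (fun t ht ↦ Real.rpow_nonneg (by linarith) _)
    (strictMonoOn_add_rpow_mul_self (by linarith) hδ) (Matrix.toEuclideanProd.injective.ne hPQ)

/-- Strict monotonicity: for `p > 1`, `δ ≥ 0`, all `d ≥ 1` and all real `d×d` matrices
`P, Q` with `P^sym ≠ Q^sym` one has `(S(P) - S(Q)):(P - Q) > 0`. -/
theorem stmt19 (p δ : ℝ) (hp : 1 < p) (hδ : 0 ≤ δ) (d : ℕ) (hd : 1 ≤ d)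
    (P Q : Matrix (Fin d) (Fin d) ℝ) (hPQ : msym P ≠ msym Q) :
    0 < mdot (Smap p δ P - Smap p δ Q) (P - Q) :=
  stmt19_general p δ hp hδ d P Q hPQ
end
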